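/- Let G be a compact group acting ergodically and strongly continuously on a unital C*-algebra A, and let τ be the unique G-invariant state on A. Then τ is faithful on A, i.e. τ(a*a) = 0 implies a = 0. -/

import Mathlib

/-!
`τ (a⋆a) • 1 = ∫ β g (a⋆a) dg` is the integral of the continuous positive function
`g ↦ (β g a)⋆ (β g a)`. Haar measure charges every nonempty open set, so a continuous positive
function `f` with vanishing integral vanishes identically: on the open set where `f` is within `ε`
of `f x₀` it dominates `f x₀ - ε`, which forces `f x₀ ≤ ε`. Evaluating at `g = 1` gives `a⋆a = 0`, hence `a = 0`.
-/

open MeasureTheory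
open scoped ComplexOrder

lemma IsSelfAdjoint.sub_algebraMap_norm_sub_le {A : Type*} [CStarAlgebra A] [PartialOrder A]
    [StarOrderedRing A] {a b : A} (ha : IsSelfAdjoint a) (hb : IsSelfAdjoint b) :
    b - algebraMap ℝ A ‖a - b‖ ≤ a := by
  have := (ha.sub hb).neg_algebraMap_norm_le_self
  rw [← sub_nonneg] at this ⊢
  convert this using 1
  abel

theorem Continuous.eq_zero_of_nonneg_of_integral_eq_zero {X A : Type*} [TopologicalSpace X]
    [MeasurableSpace X] [OpensMeasurableSpace X] {μ : Measure X} [IsFiniteMeasure μ]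
    [μ.IsOpenPosMeasure] [CStarAlgebra A] [PartialOrder A] [StarOrderedRing A] {f : X → A}
    (hf : Continuous f) (hfi : Integrable f μ) (hf0 : 0 ≤ f) (hint : ∫ x, f x ∂μ = 0) :
    f = 0 := by
  funext x₀
  refine norm_le_zero_iff.mp (le_of_forall_pos_le_add fun ε hε => ?_)
  set U : Set X := {x | ‖f x - f x₀‖ < ε}
  have hU : IsOpen U := isOpen_lt (hf.sub continuous_const).norm continuous_const
  have hμU : 0 < μ.real U :=
    ENNReal.toReal_pos (hU.measure_pos μ ⟨x₀, by simpa [U] using hε⟩).ne' (measure_ne_top μ U)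
  have hlow : ∀ x ∈ U, f x₀ - algebraMap ℝ A ε ≤ f x := fun x hx =>
    calc f x₀ - algebraMap ℝ A ε ≤ f x₀ - algebraMap ℝ A ‖f x - f x₀‖ :=
          sub_le_sub_left (algebraMap_mono A (le_of_lt hx)) _
      _ ≤ f x := (hf0 x).isSelfAdjoint.sub_algebraMap_norm_sub_le (hf0 x₀).isSelfAdjoint
  have hbound : μ.real U • (f x₀ - algebraMap ℝ A ε) ≤ 0 :=
    calc μ.real U • (f x₀ - algebraMap ℝ A ε) = ∫ x in U, (f x₀ - algebraMap ℝ A ε) ∂μ :=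
          (setIntegral_const _).symm
      _ ≤ ∫ x in U, f x ∂μ :=
          setIntegral_mono_on (integrable_const _) hfi.integrableOn hU.measurableSet hlow
      _ ≤ ∫ x, f x ∂μ := integral_mono_measure Measure.restrict_le_self (ae_of_all _ hf0) hfi
      _ = 0 := hint
  have : f x₀ ≤ algebraMap ℝ A ε := by
    rw [← sub_nonpos]
    exact (smul_nonpos_iff_nonpos_of_pos_left hμU).mp hbound
  simpa using (CStarAlgebra.norm_le_iff_le_algebraMap (f x₀) hε.le (hf0 x₀)).mpr this

theorem stmt12_general {G : Type*} [Group G] [TopologicalSpace G]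
    [CompactSpace G] [MeasurableSpace G] [BorelSpace G]
    (μ : Measure G) [μ.IsHaarMeasure]
    {A : Type*} [NormedRing A] [StarRing A] [CStarRing A] [NormedAlgebra ℂ A]
    [StarModule ℂ A] [CompleteSpace A]
    (β : G →* (A ≃ₐ[ℂ] A))
    (hβstar : ∀ (g : G) (a : A), β g (star a) = star (β g a))
    (hβcont : ∀ a : A, Continuous fun g => β g a)
    (τ : A →L[ℂ] ℂ)
    (hτinv : ∀ a : A, ∫ g, β g a ∂μ = τ a • (1 : A)) :
    ∀ a : A, τ (star a * a) = 0 → a = 0 := by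
  intro a hτa
  let _ : CStarAlgebra A := {}
  let _ : PartialOrder A := CStarAlgebra.spectralOrder A
  let _ : StarOrderedRing A := CStarAlgebra.spectralOrderedRing A
  have hβ_nonneg : 0 ≤ fun g => β g (star a * a) := fun g => show 0 ≤ β g (star a * a) by
    simpa only [map_mul, hβstar] using star_mul_self_nonneg (β g a)
  have hβ_int : Integrable (fun g => β g (star a * a)) μ :=
    (hβcont _).integrable_of_hasCompactSupport (.of_compactSpace _)
  have hβ_zero := (hβcont _).eq_zero_of_nonneg_of_integral_eq_zero hβ_int hβ_nonneg
    (by rw [hτinv, hτa, zero_smul])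
  simpa using congrFun hβ_zero 1

/-- the unique `G`-invariant state `τ` of an ergodic strongly continuous
action of a compact group `G` on a unital C*-algebra `A` (characterized by
`∫ β g a dg = τ(a) • 1`) is faithful: `τ (a* a) = 0 → a = 0`. -/
theorem stmt12 {G : Type*} [Group G] [TopologicalSpace G] [IsTopologicalGroup G]
    [CompactSpace G] [MeasurableSpace G] [BorelSpace G]
    (μ : Measure G) [μ.IsHaarMeasure] [IsProbabilityMeasure μ]
    {A : Type*} [NormedRing A] [StarRing A] [CStarRing A] [NormedAlgebra ℂ A]
    [StarModule ℂ A] [CompleteSpace A]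
    (β : G →* (A ≃ₐ[ℂ] A))
    (hβstar : ∀ (g : G) (a : A), β g (star a) = star (β g a))
    (hβcont : ∀ a : A, Continuous fun g => β g a)
    (hergodic : ∀ a : A, (∀ g : G, β g a = a) → ∃ c : ℂ, a = c • (1 : A))
    (τ : A →L[ℂ] ℂ) (hτ1 : τ 1 = 1) (hτpos : ∀ a, 0 ≤ τ (star a * a))
    (hτinv : ∀ a : A, ∫ g, β g a ∂μ = τ a • (1 : A)) :
    ∀ a : A, τ (star a * a) = 0 → a = 0 :=
  stmt12_general μ β hβstar hβcont τ hτinv
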